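/- arXiv:2410.08537 — 3 statements merged into one kernel-verified Lean document; each statement's English description precedes it below -/
import Mathlib

section
/- Let Z₁,…,Z_n be independent random variables taking values in a measurable space 𝒵, let H be a nonempty finite class of measurable real-valued functions on 𝒵, and let φ : ℝ → ℝ be an L-Lipschitz function such that φ ∘ h(Z_i) is integrable for every h ∈ H and i. Let ε₁,…,ε_n be independent Rademacher random variables, independent of (Z_i). Then E[ sup_{h∈H} Σ_{i=1}^n (φ ∘ h)(Z_i) ] ≤ sup_{h∈H} Σ_{i=1}^n E[(φ ∘ h)(Z_i)] + 4L · E[ sup_{h∈H} | Σ_{i=1}^n ε_i h(Z_i) | ]. -/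
open Finset MeasureTheory ProbabilityTheory


section Aux

variable {ι : Type*} [Fintype ι] [Nonempty ι]

lemma aux_two_point (L : NNReal) {φ : ℝ → ℝ} (hφ : LipschitzWith L φ) (C u : ι → ℝ) :
    univ.sup' univ_nonempty (fun h => C h + φ (u h)) +
      univ.sup' univ_nonempty (fun h => C h - φ (u h)) ≤
    univ.sup' univ_nonempty (fun h => C h + (L : ℝ) * u h) +
      univ.sup' univ_nonempty (fun h => C h - (L : ℝ) * u h) := by
  obtain ⟨h₁, -, e₁⟩ := Finset.exists_mem_eq_sup' univ_nonempty (fun h => C h + φ (u h))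
  obtain ⟨h₂, -, e₂⟩ := Finset.exists_mem_eq_sup' univ_nonempty (fun h => C h - φ (u h))
  rw [e₁, e₂]
  have hd : φ (u h₁) - φ (u h₂) ≤ (L : ℝ) * |u h₁ - u h₂| := by
    calc φ (u h₁) - φ (u h₂) ≤ |φ (u h₁) - φ (u h₂)| := le_abs_self _
      _ ≤ (L : ℝ) * |u h₁ - u h₂| := by
          simpa [Real.dist_eq] using hφ.dist_le_mul (u h₁) (u h₂)
  rcases le_total (u h₂) (u h₁) with hc | hc
  · have h1 : φ (u h₁) - φ (u h₂) ≤ (L : ℝ) * (u h₁ - u h₂) := by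
      rwa [abs_of_nonneg (by linarith)] at hd
    have h2 : C h₁ + φ (u h₁) + (C h₂ - φ (u h₂)) ≤
        (C h₁ + (L : ℝ) * u h₁) + (C h₂ - (L : ℝ) * u h₂) := by
      have := mul_sub (L : ℝ) (u h₁) (u h₂); linarith
    exact h2.trans (add_le_add (Finset.le_sup' (fun h => C h + (L : ℝ) * u h) (mem_univ h₁)) (Finset.le_sup' (fun h => C h - (L : ℝ) * u h) (mem_univ h₂)))
  · have h1 : φ (u h₁) - φ (u h₂) ≤ (L : ℝ) * (u h₂ - u h₁) := by
      rwa [abs_of_nonpos (by linarith), neg_sub] at hd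
    have h2 : C h₁ + φ (u h₁) + (C h₂ - φ (u h₂)) ≤
        (C h₁ - (L : ℝ) * u h₁) + (C h₂ + (L : ℝ) * u h₂) := by
      have := mul_sub (L : ℝ) (u h₂) (u h₁); linarith
    refine h2.trans ?_
    rw [add_comm (univ.sup' univ_nonempty fun h => C h + (L : ℝ) * u h)]
    exact add_le_add (Finset.le_sup' (fun h => C h - (L : ℝ) * u h) (mem_univ h₁)) (Finset.le_sup' (fun h => C h + (L : ℝ) * u h) (mem_univ h₂))

lemma aux_contraction (L : NNReal) {φ : ℝ → ℝ} (hφ : LipschitzWith L φ) :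
    ∀ (n : ℕ) (A : ι → ℝ) (t : Fin n → ι → ℝ),
    ∑ ε : Fin n → Bool, univ.sup' univ_nonempty
        (fun h => A h + ∑ i, (if ε i then (1:ℝ) else -1) * φ (t i h)) ≤
    ∑ ε : Fin n → Bool, univ.sup' univ_nonempty
        (fun h => A h + ∑ i, (if ε i then (1:ℝ) else -1) * ((L : ℝ) * t i h))
  | 0, A, t => by simp
  | (n+1), A, t => by
    have reindex : ∀ (G : (Fin (n+1) → Bool) → ℝ),
        ∑ ε : Fin (n+1) → Bool, G ε = ∑ ρ : Fin n → Bool, ∑ b : Bool, G (Fin.cons b ρ) := by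
      intro G
      rw [← Equiv.sum_comp (Fin.consEquiv (fun _ => Bool)) G, Fintype.sum_prod_type]
      rw [Finset.sum_comm]
      rfl
    rw [reindex, reindex]
    have split : ∀ (v : Fin (n+1) → ι → ℝ) (b : Bool) (ρ : Fin n → Bool) (h : ι),
        (∑ i, (if (Fin.cons b ρ : Fin (n+1) → Bool) i then (1:ℝ) else -1) * v i h) =
          (if b then (1:ℝ) else -1) * v 0 h + ∑ i, (if ρ i then (1:ℝ) else -1) * v i.succ h := by
      intro v b ρ h
      rw [Fin.sum_univ_succ]
      simp [Fin.cons_zero, Fin.cons_succ]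
    calc
      ∑ ρ : Fin n → Bool, ∑ b : Bool, univ.sup' univ_nonempty
          (fun h => A h + ∑ i, (if (Fin.cons b ρ : Fin (n+1) → Bool) i then (1:ℝ) else -1) * φ (t i h))
        ≤ ∑ ρ : Fin n → Bool, ∑ b : Bool, univ.sup' univ_nonempty
          (fun h => (A h + ∑ i, (if ρ i then (1:ℝ) else -1) * φ (t i.succ h)) +
            (if b then (1:ℝ) else -1) * ((L : ℝ) * t 0 h)) := by
          refine Finset.sum_le_sum fun ρ _ => ?_
          have lhs_eq : ∀ b : Bool, univ.sup' univ_nonempty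
              (fun h => A h + ∑ i, (if (Fin.cons b ρ : Fin (n+1) → Bool) i then (1:ℝ) else -1) * φ (t i h)) =
              univ.sup' univ_nonempty
              (fun h => (A h + ∑ i, (if ρ i then (1:ℝ) else -1) * φ (t i.succ h)) +
                (if b then (1:ℝ) else -1) * φ (t 0 h)) := by
            intro b
            refine congrArg _ (funext fun h => ?_)
            rw [split (fun i h => φ (t i h)) b ρ h]; ring
          rw [Fintype.sum_bool, Fintype.sum_bool, lhs_eq, lhs_eq]
          simpa [sub_eq_add_neg] using aux_two_point L hφ
            (fun h => A h + ∑ i, (if ρ i then (1:ℝ) else -1) * φ (t i.succ h)) (fun h => t 0 h)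
      _ ≤ ∑ ρ : Fin n → Bool, ∑ b : Bool, univ.sup' univ_nonempty
          (fun h => (A h + (if b then (1:ℝ) else -1) * ((L : ℝ) * t 0 h)) +
            ∑ i, (if ρ i then (1:ℝ) else -1) * ((L : ℝ) * t i.succ h)) := by
          rw [Finset.sum_comm, Finset.sum_comm (s := (univ : Finset (Fin n → Bool)))]
          refine Finset.sum_le_sum fun b _ => ?_
          have := aux_contraction L hφ n
            (fun h => A h + (if b then (1:ℝ) else -1) * ((L : ℝ) * t 0 h))
            (fun i h => t i.succ h)
          refine le_trans (le_of_eq ?_) (this.trans (le_of_eq ?_)) <;>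
            exact Finset.sum_congr rfl fun ρ _ => congrArg _ (funext fun h => by ring)
      _ = ∑ ρ : Fin n → Bool, ∑ b : Bool, univ.sup' univ_nonempty
          (fun h => A h + ∑ i, (if (Fin.cons b ρ : Fin (n+1) → Bool) i then (1:ℝ) else -1) *
            ((L : ℝ) * t i h)) := by
          refine Finset.sum_congr rfl fun ρ _ => Finset.sum_congr rfl fun b _ => ?_
          refine congrArg _ (funext fun h => ?_)
          rw [split (fun i h => (L : ℝ) * t i h) b ρ h]; ring

lemma aux_integrable_sup' {α γ : Type*} [MeasurableSpace α] {μ : Measure α} {s : Finset γ}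
    (hs : s.Nonempty) (F : γ → α → ℝ) (hF : ∀ i ∈ s, Integrable (F i) μ) :
    Integrable (fun x => s.sup' hs (fun i => F i x)) μ := by
  induction hs using Finset.Nonempty.cons_induction with
  | singleton a => simpa using hF a (Finset.mem_singleton_self a)
  | cons a s ha hs ih =>
      have he : (fun x => (Finset.cons a s ha).sup' (Finset.cons_nonempty ha) (fun i => F i x)) =
          fun x => F a x ⊔ s.sup' hs (fun i => F i x) :=
        funext fun x => Finset.sup'_cons hs _
      rw [he]
      exact (hF a (Finset.mem_cons_self a s)).sup
        (ih fun i hi => hF i (Finset.mem_cons.2 (Or.inr hi)))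

end Aux

/-- **Symmetrization with Ledoux–Talagrand contraction (Lemma 4 of the appendix).**
For independent random variables `Z₁,…,Z_n`, a finite nonempty class `H` of measurable
functions, and an `L`-Lipschitz `φ` with all relevant integrability, writing the expectation
over independent Rademacher signs (independent of the data) as the average over all sign
assignments,
`E[sup_h ∑_i φ(h(Z_i))] ≤ sup_h ∑_i E[φ(h(Z_i))] + 4L·E[sup_h |∑_i ε_i h(Z_i)|]`. -/
theorem expected_sup_sum_le_sup_expectation_add_rademacher
    {Ω 𝒵 ι : Type*} [MeasurableSpace Ω] [MeasurableSpace 𝒵] [Fintype ι] [Nonempty ι]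
    (P : Measure Ω) [IsProbabilityMeasure P]
    (n : ℕ) (Z : Fin n → Ω → 𝒵) (hZ_meas : ∀ i, Measurable (Z i))
    (hZ_indep : iIndepFun Z P)
    (H : ι → 𝒵 → ℝ) (hH_meas : ∀ h, Measurable (H h))
    (L : NNReal) (φ : ℝ → ℝ) (hφ : LipschitzWith L φ)
    (hint_φ : ∀ (h : ι) (i : Fin n), Integrable (fun ω => φ (H h (Z i ω))) P)
    (hint_H : ∀ (h : ι) (i : Fin n), Integrable (fun ω => H h (Z i ω)) P) :
    ∫ ω, univ.sup' univ_nonempty (fun h : ι => ∑ i, φ (H h (Z i ω))) ∂P ≤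
      (univ.sup' univ_nonempty fun h : ι => ∑ i, ∫ ω, φ (H h (Z i ω)) ∂P) +
        4 * L *
          ((∑ ε : Fin n → Bool,
              ∫ ω, univ.sup' univ_nonempty
                (fun h : ι => |∑ i, (if ε i then (1 : ℝ) else -1) * H h (Z i ω)|) ∂P) /
            (2 : ℝ) ^ n) := by
  classical
  set T : Ω → (Fin n → 𝒵) := fun ω i => Z i ω with hT_def
  have hT : Measurable T := measurable_pi_iff.mpr hZ_meas
  set μ : Fin n → Measure 𝒵 := fun i => P.map (Z i) with hμ_def
  haveI : ∀ i, IsProbabilityMeasure (μ i) := fun i => Measure.isProbabilityMeasure_map (hZ_meas i).aemeasurable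
  set ν : Measure (Fin n → 𝒵) := Measure.pi μ with hν_def
  haveI : IsProbabilityMeasure ν := by rw [hν_def]; infer_instance
  have hmap : P.map T = ν := by
    refine (Measure.pi_eq fun s hs => ?_).symm
    rw [Measure.map_apply hT (MeasurableSet.univ_pi hs)]
    have hpre : T ⁻¹' Set.pi Set.univ s = ⋂ i, Z i ⁻¹' s i := by
      ext ω; simp [hT_def, Set.mem_pi]
    rw [hpre, hZ_indep.meas_iInter (fun i => ⟨s i, hs i, rfl⟩)]
    exact Finset.prod_congr rfl fun i _ => (Measure.map_apply (hZ_meas i) (hs i)).symm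
  -- transfer lemmas
  have tr : ∀ (G : (Fin n → 𝒵) → ℝ), AEStronglyMeasurable G ν →
      ∫ ω, G (T ω) ∂P = ∫ x, G x ∂ν := by
    intro G hG
    rw [← hmap] at hG ⊢
    exact (integral_map hT.aemeasurable hG).symm
  have tri : ∀ (G : (Fin n → 𝒵) → ℝ), AEStronglyMeasurable G ν →
      (Integrable (fun ω => G (T ω)) P ↔ Integrable G ν) := by
    intro G hG
    rw [← hmap] at hG ⊢
    exact (integrable_map_measure hG hT.aemeasurable).symm
  -- basic measurability and integrability over ν
  have hφm : Measurable φ := hφ.continuous.measurable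
  have hfhi : ∀ (h : ι) (i : Fin n), Measurable (fun x : Fin n → 𝒵 => H h (x i)) :=
    fun h i => (hH_meas h).comp (measurable_pi_apply i)
  have m1 : ∀ (h : ι) (i : Fin n), Measurable (fun x : Fin n → 𝒵 => φ (H h (x i))) :=
    fun h i => hφm.comp (hfhi h i)
  have int1 : ∀ (h : ι) (i : Fin n), Integrable (fun x : Fin n → 𝒵 => φ (H h (x i))) ν :=
    fun h i => (tri _ (m1 h i).aestronglyMeasurable).mp (hint_φ h i)
  have int2 : ∀ (h : ι) (i : Fin n), Integrable (fun x : Fin n → 𝒵 => H h (x i)) ν :=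
    fun h i => (tri _ (hfhi h i).aestronglyMeasurable).mp (hint_H h i)
  set G1 : ι → (Fin n → 𝒵) → ℝ := fun h x => ∑ i, φ (H h (x i)) with hG1_def
  have intG1 : ∀ h, Integrable (G1 h) ν := fun h => integrable_finset_sum _ (fun i _ => int1 h i)
  -- product measure and marginals
  set ρ : Measure ((Fin n → 𝒵) × (Fin n → 𝒵)) := ν.prod ν with hρ_def
  haveI : IsProbabilityMeasure ρ := by rw [hρ_def]; infer_instance
  have hmapfst : ρ.map Prod.fst = ν := by
    rw [hρ_def, Measure.map_fst_prod]; simp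
  have hmapsnd : ρ.map Prod.snd = ν := by
    rw [hρ_def, Measure.map_snd_prod]; simp
  have comp_fst : ∀ (G : (Fin n → 𝒵) → ℝ), Integrable G ν →
      Integrable (fun p : (Fin n → 𝒵) × (Fin n → 𝒵) => G p.1) ρ := by
    intro G hG
    rw [← hmapfst] at hG
    exact (integrable_map_measure hG.aestronglyMeasurable measurable_fst.aemeasurable).mp hG
  have comp_snd : ∀ (G : (Fin n → 𝒵) → ℝ), Integrable G ν →
      Integrable (fun p : (Fin n → 𝒵) × (Fin n → 𝒵) => G p.2) ρ := by
    intro G hG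
    rw [← hmapsnd] at hG
    exact (integrable_map_measure hG.aestronglyMeasurable measurable_snd.aemeasurable).mp hG
  have int_fst_eq : ∀ (G : (Fin n → 𝒵) → ℝ), AEStronglyMeasurable G ν →
      ∫ p, G p.1 ∂ρ = ∫ x, G x ∂ν := by
    intro G hG
    rw [← hmapfst] at hG ⊢
    exact (integral_map measurable_fst.aemeasurable hG).symm
  have int_snd_eq : ∀ (G : (Fin n → 𝒵) → ℝ), AEStronglyMeasurable G ν →
      ∫ p, G p.2 ∂ρ = ∫ x, G x ∂ν := by
    intro G hG
    rw [← hmapsnd] at hG ⊢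
    exact (integral_map measurable_snd.aemeasurable hG).symm
  -- the conditional-swap maps preserve ρ
  set Sw : (Fin n → Bool) → ((Fin n → 𝒵) × (Fin n → 𝒵)) → ((Fin n → 𝒵) × (Fin n → 𝒵)) :=
    fun ε p => (fun i => if ε i then p.1 i else p.2 i, fun i => if ε i then p.2 i else p.1 i)
    with hSw_def
  have mpSw : ∀ ε : Fin n → Bool, MeasurePreserving (Sw ε) ρ ρ := by
    intro ε
    set κ : Measure (Fin n → 𝒵 × 𝒵) := Measure.pi (fun i => (μ i).prod (μ i)) with hκ_def
    have mpΦ : MeasurePreserving (MeasurableEquiv.arrowProdEquivProdArrow 𝒵 𝒵 (Fin n)) κ ρ :=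
      measurePreserving_arrowProdEquivProdArrow 𝒵 𝒵 (Fin n) μ μ
    have mpg : MeasurePreserving
        (fun (z : Fin n → 𝒵 × 𝒵) i => if ε i then z i else (z i).swap) κ κ := by
      have hf : ∀ i, MeasurePreserving (fun a : 𝒵 × 𝒵 => if ε i then a else a.swap)
          ((μ i).prod (μ i)) ((μ i).prod (μ i)) := by
        intro i
        rcases hb : ε i with _ | _
        · simp only [hb, Bool.false_eq_true, if_false]
          exact Measure.measurePreserving_swap
        · simp only [hb, if_true]
          exact MeasurePreserving.id _
      exact measurePreserving_pi (fun i => (μ i).prod (μ i)) (fun i => (μ i).prod (μ i)) hf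
    have hcomp : Sw ε = (MeasurableEquiv.arrowProdEquivProdArrow 𝒵 𝒵 (Fin n)) ∘
        (fun (z : Fin n → 𝒵 × 𝒵) i => if ε i then z i else (z i).swap) ∘
        (MeasurableEquiv.arrowProdEquivProdArrow 𝒵 𝒵 (Fin n)).symm := by
      funext p
      refine Prod.ext ?_ ?_ <;> funext i <;>
        simp only [hSw_def, Function.comp_apply, MeasurableEquiv.arrowProdEquivProdArrow,
          Equiv.arrowProdEquivProdArrow, MeasurableEquiv.coe_mk, Equiv.coe_fn_mk,
          MeasurableEquiv.symm_mk, Equiv.coe_fn_symm_mk] <;>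
        rcases hb : ε i with _ | _ <;> simp [hb, Prod.swap]
    rw [hcomp]
    exact (mpΦ.comp mpg).comp (MeasurePreserving.symm _ mpΦ)
  -- key function definitions
  set S : (Fin n → 𝒵) → ℝ := fun x => univ.sup' univ_nonempty (fun h : ι => G1 h x) with hS_def
  set c : ℝ := univ.sup' univ_nonempty (fun h : ι => ∑ i, ∫ ω, φ (H h (Z i ω)) ∂P) with hc_def
  set A : (Fin n → Bool) → (Fin n → 𝒵) → ℝ := fun ε x => univ.sup' univ_nonempty
    (fun h : ι => ∑ i, (if ε i then (1:ℝ) else -1) * φ (H h (x i))) with hA_def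
  set R : (Fin n → Bool) → (Fin n → 𝒵) → ℝ := fun ε x => univ.sup' univ_nonempty
    (fun h : ι => |∑ i, (if ε i then (1:ℝ) else -1) * H h (x i)|) with hR_def
  set D : ((Fin n → 𝒵) × (Fin n → 𝒵)) → ℝ := fun p => univ.sup' univ_nonempty
    (fun h : ι => G1 h p.1 - G1 h p.2) with hD_def
  set De : (Fin n → Bool) → ((Fin n → 𝒵) × (Fin n → 𝒵)) → ℝ := fun ε p =>
    univ.sup' univ_nonempty
      (fun h : ι => ∑ i, (if ε i then (1:ℝ) else -1) * (φ (H h (p.1 i)) - φ (H h (p.2 i))))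
    with hDe_def
  -- integrability
  have intS : Integrable S ν := aux_integrable_sup' univ_nonempty _ (fun h _ => intG1 h)
  have intA : ∀ ε, Integrable (A ε) ν := fun ε =>
    aux_integrable_sup' univ_nonempty _ (fun h _ =>
      integrable_finset_sum _ (fun i _ => (int1 h i).const_mul _))
  have intR : ∀ ε, Integrable (R ε) ν := fun ε =>
    aux_integrable_sup' univ_nonempty _ (fun h _ =>
      (integrable_finset_sum _ (fun i _ => (int2 h i).const_mul _)).abs)
  have intD : Integrable D ρ :=
    aux_integrable_sup' univ_nonempty _ (fun h _ =>
      (comp_fst _ (intG1 h)).sub (comp_snd _ (intG1 h)))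
  have intDe : ∀ ε, Integrable (De ε) ρ := fun ε =>
    aux_integrable_sup' univ_nonempty _ (fun h _ =>
      integrable_finset_sum _ (fun i _ =>
        (((comp_fst _ (int1 h i)).sub (comp_snd _ (int1 h i))).const_mul _)))
  -- c h as an integral over ν
  have hc : ∀ h : ι, (∑ i, ∫ ω, φ (H h (Z i ω)) ∂P) = ∫ y, G1 h y ∂ν := by
    intro h
    rw [hG1_def]
    rw [integral_finset_sum _ (fun i _ => int1 h i)]
    exact Finset.sum_congr rfl fun i _ => tr _ (m1 h i).aestronglyMeasurable
  -- Step 1 : ∫ S dν - c ≤ ∫ D dρ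
  have key1 : ∫ x, S x ∂ν - c ≤ ∫ p, D p ∂ρ := by
    have pointwise : ∀ x, S x - c ≤ ∫ y, D (x, y) ∂ν := by
      intro x
      obtain ⟨h₀, -, e₀⟩ := Finset.exists_mem_eq_sup' (univ_nonempty (α := ι)) (fun h => G1 h x)
      have h1 : (∑ i, ∫ ω, φ (H h₀ (Z i ω)) ∂P) ≤ c :=
        Finset.le_sup' (fun h : ι => ∑ i, ∫ ω, φ (H h (Z i ω)) ∂P) (mem_univ h₀)
      rw [hc h₀] at h1
      have h2 : S x - c ≤ G1 h₀ x - ∫ y, G1 h₀ y ∂ν := by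
        rw [hS_def]; simp only []; rw [e₀]; linarith
      refine h2.trans ?_
      have h3 : G1 h₀ x - ∫ y, G1 h₀ y ∂ν = ∫ y, (G1 h₀ x - G1 h₀ y) ∂ν := by
        rw [integral_sub (integrable_const _) (intG1 h₀), integral_const, probReal_univ]
        simp
      rw [h3]
      refine integral_mono ((integrable_const _).sub (intG1 h₀)) ?_ (fun y => ?_)
      · exact aux_integrable_sup' univ_nonempty (fun h y => G1 h x - G1 h y)
          (fun h _ => (integrable_const _).sub (intG1 h))
      · exact Finset.le_sup' (fun h : ι => G1 h x - G1 h y) (mem_univ h₀)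
    calc ∫ x, S x ∂ν - c = ∫ x, (S x - c) ∂ν := by
          rw [integral_sub intS (integrable_const c), integral_const, probReal_univ]; simp
      _ ≤ ∫ x, (∫ y, D (x, y) ∂ν) ∂ν :=
          integral_mono (intS.sub (integrable_const c)) intD.integral_prod_left pointwise
      _ = ∫ p, D p ∂ρ := (integral_prod D intD).symm
  -- Step 2 : ∫ De ε dρ = ∫ D dρ
  have key2 : ∀ ε : Fin n → Bool, ∫ p, De ε p ∂ρ = ∫ p, D p ∂ρ := by
    intro ε
    have hcomp : ∀ p, D (Sw ε p) = De ε p := by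
      intro p
      simp only [hD_def, hDe_def, hG1_def, hSw_def]
      refine congrArg _ (funext fun h => ?_)
      rw [← Finset.sum_sub_distrib]
      refine Finset.sum_congr rfl fun i _ => ?_
      rcases hb : ε i with _ | _ <;> simp [hb] <;> ring
    have h1 : ∫ q, D q ∂(Measure.map (Sw ε) ρ) = ∫ p, D (Sw ε p) ∂ρ :=
      integral_map (mpSw ε).measurable.aemeasurable
        (by rw [(mpSw ε).map_eq]; exact intD.aestronglyMeasurable)
    rw [(mpSw ε).map_eq] at h1
    rw [h1]
    exact integral_congr_ae (Filter.Eventually.of_forall fun p => (hcomp p).symm)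
  -- Step 3 : ∫ De ε dρ ≤ ∫ A ε dν + ∫ A (!ε) dν
  have key3 : ∀ ε : Fin n → Bool,
      ∫ p, De ε p ∂ρ ≤ ∫ x, A ε x ∂ν + ∫ x, A (fun i => !(ε i)) x ∂ν := by
    intro ε
    have pointwise : ∀ p, De ε p ≤ A ε p.1 + A (fun i => !(ε i)) p.2 := by
      intro p
      refine Finset.sup'_le _ _ fun h _ => ?_
      have hsplit : (∑ i, (if ε i then (1:ℝ) else -1) * (φ (H h (p.1 i)) - φ (H h (p.2 i)))) =
          (∑ i, (if ε i then (1:ℝ) else -1) * φ (H h (p.1 i))) +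
          (∑ i, (if !(ε i) then (1:ℝ) else -1) * φ (H h (p.2 i))) := by
        rw [← Finset.sum_add_distrib]
        refine Finset.sum_congr rfl fun i _ => ?_
        rcases hb : ε i with _ | _ <;> simp [hb] <;> ring
      rw [hsplit]
      exact add_le_add
        (Finset.le_sup' (fun h : ι => ∑ i, (if ε i then (1:ℝ) else -1) * φ (H h (p.1 i)))
          (mem_univ h))
        (Finset.le_sup' (fun h : ι => ∑ i, (if !(ε i) then (1:ℝ) else -1) * φ (H h (p.2 i)))
          (mem_univ h))
    calc ∫ p, De ε p ∂ρ ≤ ∫ p, (A ε p.1 + A (fun i => !(ε i)) p.2) ∂ρ :=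
          integral_mono (intDe ε)
            ((comp_fst _ (intA ε)).add (comp_snd _ (intA _))) pointwise
      _ = ∫ x, A ε x ∂ν + ∫ x, A (fun i => !(ε i)) x ∂ν := by
          rw [integral_add (comp_fst _ (intA ε)) (comp_snd _ (intA _)),
            int_fst_eq _ (intA ε).aestronglyMeasurable,
            int_snd_eq _ (intA _).aestronglyMeasurable]
  -- Step 4 : contraction
  have key4 : (∑ ε : Fin n → Bool, ∫ x, A ε x ∂ν) ≤
      (L : ℝ) * ∑ ε : Fin n → Bool, ∫ x, R ε x ∂ν := by
    have pointwise : ∀ x, (∑ ε : Fin n → Bool, A ε x) ≤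
        (L : ℝ) * ∑ ε : Fin n → Bool, R ε x := by
      intro x
      have hcontr := aux_contraction L hφ n (fun _ : ι => (0:ℝ)) (fun i h => H h (x i))
      have hl : (∑ ε : Fin n → Bool, A ε x) = ∑ ε : Fin n → Bool, univ.sup' univ_nonempty
          (fun h : ι => (0:ℝ) + ∑ i, (if ε i then (1:ℝ) else -1) * φ (H h (x i))) := by
        refine Finset.sum_congr rfl fun ε _ => ?_
        simp only [hA_def]
        exact congrArg _ (funext fun h => by ring)
      have hr : (∑ ε : Fin n → Bool, univ.sup' univ_nonempty
          (fun h : ι => (0:ℝ) + ∑ i, (if ε i then (1:ℝ) else -1) * ((L : ℝ) * H h (x i)))) ≤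
          (L : ℝ) * ∑ ε : Fin n → Bool, R ε x := by
        rw [Finset.mul_sum]
        refine Finset.sum_le_sum fun ε _ => ?_
        refine Finset.sup'_le _ _ fun h _ => ?_
        have he : (0:ℝ) + ∑ i, (if ε i then (1:ℝ) else -1) * ((L : ℝ) * H h (x i)) =
            (L : ℝ) * ∑ i, (if ε i then (1:ℝ) else -1) * H h (x i) := by
          rw [Finset.mul_sum]
          rw [zero_add]
          exact Finset.sum_congr rfl fun i _ => by ring
        rw [he]
        refine mul_le_mul_of_nonneg_left ?_ L.coe_nonneg
        exact (le_abs_self _).trans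
          (Finset.le_sup' (fun h : ι => |∑ i, (if ε i then (1:ℝ) else -1) * H h (x i)|)
            (mem_univ h))
      rw [hl]
      exact hcontr.trans hr
    calc (∑ ε : Fin n → Bool, ∫ x, A ε x ∂ν) = ∫ x, (∑ ε : Fin n → Bool, A ε x) ∂ν :=
          (integral_finset_sum _ fun ε _ => intA ε).symm
      _ ≤ ∫ x, ((L : ℝ) * ∑ ε : Fin n → Bool, R ε x) ∂ν :=
          integral_mono (integrable_finset_sum _ fun ε _ => intA ε)
            ((integrable_finset_sum _ fun ε _ => intR ε).const_mul _) pointwise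
      _ = (L : ℝ) * ∑ ε : Fin n → Bool, ∫ x, R ε x ∂ν := by
          rw [integral_const_mul, integral_finset_sum _ fun ε _ => intR ε]
  -- Step 5 : transfer the Rademacher term back to Ω
  have key5 : ∀ ε : Fin n → Bool,
      (∫ ω, univ.sup' univ_nonempty
        (fun h : ι => |∑ i, (if ε i then (1 : ℝ) else -1) * H h (Z i ω)|) ∂P) =
      ∫ x, R ε x ∂ν := fun ε => tr (R ε) (intR ε).aestronglyMeasurable
  -- assembly
  have hI : (∫ ω, univ.sup' univ_nonempty (fun h : ι => ∑ i, φ (H h (Z i ω))) ∂P) =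
      ∫ x, S x ∂ν := tr S intS.aestronglyMeasurable
  have hQ : (∑ ε : Fin n → Bool, ∫ ω, univ.sup' univ_nonempty
        (fun h : ι => |∑ i, (if ε i then (1 : ℝ) else -1) * H h (Z i ω)|) ∂P) =
      ∑ ε : Fin n → Bool, ∫ x, R ε x ∂ν :=
    Finset.sum_congr rfl fun ε _ => key5 ε
  rw [hI, hQ]
  set QR : ℝ := ∑ ε : Fin n → Bool, ∫ x, R ε x ∂ν with hQR_def
  have h2n : (0:ℝ) < 2 ^ n := by positivity
  have e2 : (∑ ε : Fin n → Bool, ∫ p, De ε p ∂ρ) = (2:ℝ) ^ n * ∫ p, D p ∂ρ := by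
    rw [Finset.sum_congr rfl fun ε _ => key2 ε, Finset.sum_const, card_univ]
    simp [nsmul_eq_mul]
  have hneg : (∑ ε : Fin n → Bool, ∫ x, A (fun i => !(ε i)) x ∂ν) =
      ∑ ε : Fin n → Bool, ∫ x, A ε x ∂ν := by
    refine Fintype.sum_bijective (fun ε : Fin n → Bool => fun i => !(ε i))
      (Function.Involutive.bijective ?_) _ _ (fun ε => rfl)
    intro ε; funext i; simp
  have e3 : (∑ ε : Fin n → Bool, ∫ p, De ε p ∂ρ) ≤
      2 * ∑ ε : Fin n → Bool, ∫ x, A ε x ∂ν := by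
    calc (∑ ε : Fin n → Bool, ∫ p, De ε p ∂ρ)
        ≤ ∑ ε : Fin n → Bool, (∫ x, A ε x ∂ν + ∫ x, A (fun i => !(ε i)) x ∂ν) :=
          Finset.sum_le_sum fun ε _ => key3 ε
      _ = (∑ ε : Fin n → Bool, ∫ x, A ε x ∂ν) +
          ∑ ε : Fin n → Bool, ∫ x, A (fun i => !(ε i)) x ∂ν := Finset.sum_add_distrib
      _ = 2 * ∑ ε : Fin n → Bool, ∫ x, A ε x ∂ν := by rw [hneg]; ring
  have hQR0 : 0 ≤ QR := by
    refine Finset.sum_nonneg fun ε _ => integral_nonneg fun x => ?_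
    simp only [hR_def]
    exact le_trans (abs_nonneg _)
      (Finset.le_sup' (fun h : ι => |∑ i, (if ε i then (1:ℝ) else -1) * H h (x i)|)
        (mem_univ (Classical.arbitrary ι)))
  have hD_le : ∫ p, D p ∂ρ ≤ 2 * ((L : ℝ) * QR) / 2 ^ n := by
    have : ∫ p, D p ∂ρ = (∑ ε : Fin n → Bool, ∫ p, De ε p ∂ρ) / 2 ^ n := by
      rw [e2]; field_simp
    rw [this]
    have hnum : (∑ ε : Fin n → Bool, ∫ p, De ε p ∂ρ) ≤ 2 * ((L : ℝ) * QR) :=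
      e3.trans (mul_le_mul_of_nonneg_left key4 (by norm_num))
    exact (div_le_div_iff_of_pos_right h2n).mpr hnum
  have hfinal : 2 * ((L : ℝ) * QR) / 2 ^ n ≤ 4 * (L : ℝ) * (QR / 2 ^ n) := by
    have h1 : 2 * ((L : ℝ) * QR) / 2 ^ n = 2 * (L : ℝ) * (QR / 2 ^ n) := by ring
    have h2 : 0 ≤ QR / 2 ^ n := div_nonneg hQR0 h2n.le
    have h3 : (2 : ℝ) * L ≤ 4 * L := by nlinarith [L.coe_nonneg]
    rw [h1]
    exact mul_le_mul_of_nonneg_right h3 h2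
  linarith [key1]
end

section
/- Let Π and Λ be nonempty finite sets, let Q_λ : Π → ℝ for each λ ∈ Λ, and let Q : Π → ℝ. Define R_λ(π) = max_{π'∈Π} Q_λ(π') − Q_λ(π) and R(π) = max_{π'∈Π} Q(π') − Q(π). Then for every π̂ ∈ Π: R(π̂) ≤ 2 · min_{λ∈Λ} max_{π∈Π} |Q_λ(π) − Q(π)| + max_{λ∈Λ} R_λ(π̂). -/
open Finset

/-- **Target regret decomposition (Theorem 2, first part).**
For finite nonempty sets of policies `Π` and mixture weights `Λ`, mixture policy values
`Q_λ : Π → ℝ` and target policy value `Q : Π → ℝ`, with regrets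
`R_λ(π) = max_{π'} Q_λ(π') - Q_λ(π)` and `R(π) = max_{π'} Q(π') - Q(π)`, every policy `π̂`
satisfies `R(π̂) ≤ 2 · min_λ max_π |Q_λ(π) - Q(π)| + max_λ R_λ(π̂)`. -/
theorem target_regret_le_discrepancy_add_mixture_regret
    {Pol Lam : Type*} [Fintype Pol] [Nonempty Pol] [Fintype Lam] [Nonempty Lam]
    (Qmix : Lam → Pol → ℝ) (Q : Pol → ℝ) (pihat : Pol) :
    (univ.sup' univ_nonempty fun π' => Q π') - Q pihat ≤
      2 * (univ.inf' univ_nonempty fun lam =>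
            univ.sup' univ_nonempty fun π => |Qmix lam π - Q π|) +
        (univ.sup' univ_nonempty fun lam =>
          (univ.sup' univ_nonempty fun π' => Qmix lam π') - Qmix lam pihat) := by
  obtain ⟨lam, -, hlam⟩ := exists_mem_eq_inf' univ_nonempty
    (fun lam => univ.sup' univ_nonempty fun π => |Qmix lam π - Q π|)
  set d := univ.inf' univ_nonempty fun lam =>
    univ.sup' univ_nonempty fun π => |Qmix lam π - Q π| with hd
  have hbound : ∀ π : Pol, |Qmix lam π - Q π| ≤ d := fun π => by
    calc |Qmix lam π - Q π| ≤ univ.sup' univ_nonempty fun π => |Qmix lam π - Q π| := le_sup' (fun π => |Qmix lam π - Q π|) (mem_univ π)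
    _ = d := hlam.symm
  have h1 : (univ.sup' univ_nonempty fun π' => Q π') ≤
      (univ.sup' univ_nonempty fun π' => Qmix lam π') + d := by
    apply sup'_le
    intro π _
    have := hbound π
    have h2 : Qmix lam π ≤ univ.sup' univ_nonempty fun π' => Qmix lam π' :=
      le_sup' _ (mem_univ π)
    have := abs_le.mp this
    linarith [this.2]
  have h3 : Qmix lam pihat - d ≤ Q pihat := by
    have := abs_le.mp (hbound pihat); linarith [this.1]
  have h4 : (univ.sup' univ_nonempty fun π' => Qmix lam π') - Qmix lam pihat ≤
      univ.sup' univ_nonempty fun l =>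
        (univ.sup' univ_nonempty fun π' => Qmix l π') - Qmix l pihat :=
    le_sup' (fun l => (univ.sup' univ_nonempty fun π' => Qmix l π') - Qmix l pihat) (mem_univ lam)
  linarith
end

section
/- Let S be a finite set with positive sample sizes (n_s) and nonnegative weights (λ_s) with Σ_s λ_s = 1, let 𝒜 be a finite action set, and for each s ∈ S and i ∈ [n_s] let a_i^s, b_i^s ∈ ℝ^𝒜 be vectors and x_i^s covariates. For any pair of policies π_a, π_b : 𝒳 → 𝒜 and any assignment c_i^s ∈ 𝒜, define S₃(π_a, π_b) = Σ_s (λ_s/n_s) Σ_i [ a_i^s(π_a(x_i^s))·b_i^s(π_a(x_i^s))·1{c_i^s = π_a(x_i^s)} − a_i^s(π_b(x_i^s))·b_i^s(π_b(x_i^s))·1{c_i^s = π_b(x_i^s)} ]. Then sup_{π_a, π_b} |S₃(π_a, π_b)| ≤ 2 · √( Σ_s (λ_s/n_s) Σ_i ‖a_i^s‖₂² ) · √( Σ_s (λ_s/n_s) Σ_i ‖b_i^s‖₂² ), where the supremum is over all pairs of policies and ‖·‖₂ is the Euclidean norm on ℝ^𝒜. -/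
open scoped Classical

open Finset

/-- Weighted Cauchy–Schwarz over a finite index type. -/
lemma weighted_cauchy_schwarz {ι : Type*} [Fintype ι] (w u v : ι → ℝ)
    (hw : ∀ i, 0 ≤ w i) :
    ∑ i, w i * (u i * v i) ≤
      Real.sqrt (∑ i, w i * u i ^ 2) * Real.sqrt (∑ i, w i * v i ^ 2) := by
  have key := Finset.sum_mul_sq_le_sq_mul_sq Finset.univ
      (fun i => Real.sqrt (w i) * u i) (fun i => Real.sqrt (w i) * v i)
  have h1 : ∀ i : ι, (Real.sqrt (w i) * u i) * (Real.sqrt (w i) * v i)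
      = w i * (u i * v i) := by
    intro i
    have : Real.sqrt (w i) * Real.sqrt (w i) = w i := Real.mul_self_sqrt (hw i)
    ring_nf
    rw [Real.sq_sqrt (hw i)]; ring
  have h2 : ∀ i : ι, (Real.sqrt (w i) * u i) ^ 2 = w i * u i ^ 2 := by
    intro i; rw [mul_pow, Real.sq_sqrt (hw i)]
  have h3 : ∀ i : ι, (Real.sqrt (w i) * v i) ^ 2 = w i * v i ^ 2 := by
    intro i; rw [mul_pow, Real.sq_sqrt (hw i)]
  rw [Finset.sum_congr rfl (fun i _ => h1 i), Finset.sum_congr rfl (fun i _ => h2 i),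
    Finset.sum_congr rfl (fun i _ => h3 i)] at key
  calc ∑ i, w i * (u i * v i) ≤ |∑ i, w i * (u i * v i)| := le_abs_self _
    _ = Real.sqrt ((∑ i, w i * (u i * v i)) ^ 2) := (Real.sqrt_sq_eq_abs _).symm
    _ ≤ Real.sqrt ((∑ i, w i * u i ^ 2) * (∑ i, w i * v i ^ 2)) :=
        Real.sqrt_le_sqrt key
    _ = _ := Real.sqrt_mul (Finset.sum_nonneg fun i _ =>
        mul_nonneg (hw i) (sq_nonneg _)) _

/-- **Cauchy–Schwarz bound on the product-of-errors term `S₃`.**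
For a finite source set `S` with positive sizes `n s` and nonnegative weights `λ s` summing
to 1, vectors `a_i^s, b_i^s ∈ ℝ^𝒜` and covariates `x_i^s`, with
`S₃(π_a,π_b) = ∑_s (λ_s/n_s) ∑_i [a_i^s(π_a x_i^s)·b_i^s(π_a x_i^s)·1{c_i^s = π_a x_i^s}
  - a_i^s(π_b x_i^s)·b_i^s(π_b x_i^s)·1{c_i^s = π_b x_i^s}]`,
the supremum of `|S₃|` over all pairs of policies is at most
`2·√(∑_s (λ_s/n_s) ∑_i ‖a_i^s‖₂²)·√(∑_s (λ_s/n_s) ∑_i ‖b_i^s‖₂²)`. -/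
theorem productOfErrors_sup_le
    {S 𝒳 𝒜 : Type*} [Fintype S] [Nonempty S] [Fintype 𝒜] [Nonempty 𝒜]
    (n : S → ℕ) (hn_pos : ∀ s, 0 < n s)
    (lam : S → ℝ) (hlam_nonneg : ∀ s, 0 ≤ lam s) (hlam_sum : ∑ s, lam s = 1)
    (x : (s : S) → Fin (n s) → 𝒳)
    (a b : (s : S) → Fin (n s) → 𝒜 → ℝ)
    (c : (s : S) → Fin (n s) → 𝒜) :
    sSup {v : ℝ | ∃ πa πb : 𝒳 → 𝒜,
        v = |∑ s, (lam s / (n s : ℝ)) * ∑ i,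
              ((a s i (πa (x s i)) * b s i (πa (x s i)) *
                  (if c s i = πa (x s i) then 1 else 0)) -
                (a s i (πb (x s i)) * b s i (πb (x s i)) *
                  (if c s i = πb (x s i) then 1 else 0)))|} ≤
      2 * Real.sqrt (∑ s, (lam s / (n s : ℝ)) * ∑ i, ∑ act, (a s i act) ^ 2) *
        Real.sqrt (∑ s, (lam s / (n s : ℝ)) * ∑ i, ∑ act, (b s i act) ^ 2) := by
  set A := ∑ s, (lam s / (n s : ℝ)) * ∑ i, ∑ act, (a s i act) ^ 2 with hA
  set B := ∑ s, (lam s / (n s : ℝ)) * ∑ i, ∑ act, (b s i act) ^ 2 with hB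
  have hw : ∀ s : S, 0 ≤ lam s / (n s : ℝ) := fun s =>
    div_nonneg (hlam_nonneg s) (Nat.cast_nonneg _)
  -- single-policy bound
  have single : ∀ π : 𝒳 → 𝒜,
      |∑ s, (lam s / (n s : ℝ)) * ∑ i,
          (a s i (π (x s i)) * b s i (π (x s i)) *
            (if c s i = π (x s i) then 1 else 0))| ≤
        Real.sqrt A * Real.sqrt B := by
    intro π
    -- flatten to sigma type
    set ι := Σ s : S, Fin (n s)
    set w : ι → ℝ := fun p => lam p.1 / (n p.1 : ℝ)
    set u : ι → ℝ := fun p => |a p.1 p.2 (π (x p.1 p.2))|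
    set v : ι → ℝ := fun p => |b p.1 p.2 (π (x p.1 p.2))|
    have hwp : ∀ p : ι, 0 ≤ w p := fun p => hw p.1
    have step1 : |∑ s, (lam s / (n s : ℝ)) * ∑ i,
          (a s i (π (x s i)) * b s i (π (x s i)) *
            (if c s i = π (x s i) then 1 else 0))| ≤ ∑ p : ι, w p * (u p * v p) := by
      have : ∑ p : ι, w p * (u p * v p)
          = ∑ s, ∑ i, (lam s / (n s : ℝ)) *
              (|a s i (π (x s i))| * |b s i (π (x s i))|) := by
        rw [← Finset.univ_sigma_univ, Finset.sum_sigma]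
      rw [this]
      calc |∑ s, (lam s / (n s : ℝ)) * ∑ i,
            (a s i (π (x s i)) * b s i (π (x s i)) *
              (if c s i = π (x s i) then 1 else 0))|
          ≤ ∑ s, |(lam s / (n s : ℝ)) * ∑ i,
            (a s i (π (x s i)) * b s i (π (x s i)) *
              (if c s i = π (x s i) then 1 else 0))| := Finset.abs_sum_le_sum_abs _ _
        _ ≤ ∑ s, ∑ i, (lam s / (n s : ℝ)) *
              (|a s i (π (x s i))| * |b s i (π (x s i))|) := by
            refine Finset.sum_le_sum fun s _ => ?_
            rw [abs_mul, abs_of_nonneg (hw s), ← Finset.mul_sum]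
            refine mul_le_mul_of_nonneg_left ?_ (hw s)
            calc |∑ i, (a s i (π (x s i)) * b s i (π (x s i)) *
                  (if c s i = π (x s i) then 1 else 0))|
                ≤ ∑ i, |a s i (π (x s i)) * b s i (π (x s i)) *
                  (if c s i = π (x s i) then 1 else 0)| := Finset.abs_sum_le_sum_abs _ _
              _ ≤ ∑ i, |a s i (π (x s i))| * |b s i (π (x s i))| := by
                  refine Finset.sum_le_sum fun i _ => ?_
                  rw [abs_mul, abs_mul]
                  by_cases h : c s i = π (x s i) <;> simp [h]
                  positivity
    have step2 : ∑ p : ι, w p * (u p * v p) ≤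
        Real.sqrt (∑ p : ι, w p * u p ^ 2) * Real.sqrt (∑ p : ι, w p * v p ^ 2) :=
      weighted_cauchy_schwarz w u v hwp
    have hAle : ∑ p : ι, w p * u p ^ 2 ≤ A := by
      have : ∑ p : ι, w p * u p ^ 2
          = ∑ s, (lam s / (n s : ℝ)) * ∑ i, (a s i (π (x s i))) ^ 2 := by
        rw [← Finset.univ_sigma_univ, Finset.sum_sigma]
        simp [w, u, v, sq_abs, Finset.mul_sum]
      rw [this, hA]
      refine Finset.sum_le_sum fun s _ => mul_le_mul_of_nonneg_left
        (Finset.sum_le_sum fun i _ => ?_) (hw s)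
      exact Finset.single_le_sum (f := fun act => (a s i act) ^ 2)
        (fun act _ => sq_nonneg _) (Finset.mem_univ _)
    have hBle : ∑ p : ι, w p * v p ^ 2 ≤ B := by
      have : ∑ p : ι, w p * v p ^ 2
          = ∑ s, (lam s / (n s : ℝ)) * ∑ i, (b s i (π (x s i))) ^ 2 := by
        rw [← Finset.univ_sigma_univ, Finset.sum_sigma]
        simp [w, u, v, sq_abs, Finset.mul_sum]
      rw [this, hB]
      refine Finset.sum_le_sum fun s _ => mul_le_mul_of_nonneg_left
        (Finset.sum_le_sum fun i _ => ?_) (hw s)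
      exact Finset.single_le_sum (f := fun act => (b s i act) ^ 2)
        (fun act _ => sq_nonneg _) (Finset.mem_univ _)
    calc _ ≤ ∑ p : ι, w p * (u p * v p) := step1
      _ ≤ Real.sqrt (∑ p : ι, w p * u p ^ 2) * Real.sqrt (∑ p : ι, w p * v p ^ 2) := step2
      _ ≤ Real.sqrt A * Real.sqrt B :=
          mul_le_mul (Real.sqrt_le_sqrt hAle) (Real.sqrt_le_sqrt hBle)
            (Real.sqrt_nonneg _) (Real.sqrt_nonneg _)
  refine Real.sSup_le ?_ ?_
  · rintro v ⟨πa, πb, rfl⟩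
    have hsplit : ∑ s, (lam s / (n s : ℝ)) * ∑ i,
          ((a s i (πa (x s i)) * b s i (πa (x s i)) *
              (if c s i = πa (x s i) then 1 else 0)) -
            (a s i (πb (x s i)) * b s i (πb (x s i)) *
              (if c s i = πb (x s i) then 1 else 0)))
        = (∑ s, (lam s / (n s : ℝ)) * ∑ i,
            (a s i (πa (x s i)) * b s i (πa (x s i)) *
              (if c s i = πa (x s i) then 1 else 0)))
          - ∑ s, (lam s / (n s : ℝ)) * ∑ i,
            (a s i (πb (x s i)) * b s i (πb (x s i)) *
              (if c s i = πb (x s i) then 1 else 0)) := by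
      rw [← Finset.sum_sub_distrib]
      exact Finset.sum_congr rfl fun s _ => by rw [← mul_sub, ← Finset.sum_sub_distrib]
    rw [hsplit]
    calc |_ - _| ≤ |_| + |_| := abs_sub _ _
      _ ≤ Real.sqrt A * Real.sqrt B + Real.sqrt A * Real.sqrt B :=
          add_le_add (single πa) (single πb)
      _ = 2 * Real.sqrt A * Real.sqrt B := by ring
  · positivity
end
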